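/- For 0 < α < 1, ħ > 0 and θ ∈ ℝⁿ, there is a constant C depending only on α and n such that | |2πθ|^{2α} − ħ^{-2α} |2 sin(πħθ)|^{2α} | ≤ C ħ^{2α} |θ|^{4α}, where |2 sin(πħθ)|^{2α} := (∑_{j=1}^n 4 sin²(πħθ_j))^α and |2πθ|^{2α} := (∑_{j=1}^n 4π²θ_j²)^α. -/

import Mathlib

/-!
Coordinatewise, `|x² - sin² x| = |x - sin x| |x + sin x| ≤ (|x|³ / 6) (2 |x|) = x⁴ / 3`, so with
`x = πħθⱼ` the two sums inside the `α`-th powers, after rescaling by `ħ²`, differ by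
`O(ħ⁴ |θ|⁴)`. Since `t ↦ t ^ α` is `α`-Hölder on `[0, ∞)` with constant `1` (a consequence of
its subadditivity), this becomes an `O(ħ^{4α} |θ|^{4α})` bound on the difference of the `α`-th
powers, and undoing the scaling by `ħ^{-2α}` leaves `O(ħ^{2α} |θ|^{4α})`.
-/

open Real Finset

theorem Real.abs_rpow_sub_rpow_le {s t p : ℝ} (hs : 0 ≤ s) (ht : 0 ≤ t) (hp : 0 ≤ p)
    (hp1 : p ≤ 1) : |s ^ p - t ^ p| ≤ |s - t| ^ p := by
  wlog hts : t ≤ s generalizing s t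
  · rw [abs_sub_comm, abs_sub_comm s]
    exact this ht hs (le_of_not_ge hts)
  rw [abs_of_nonneg (sub_nonneg.2 (rpow_le_rpow ht hts hp)), abs_of_nonneg (sub_nonneg.2 hts)]
  have := rpow_add_le_add_rpow (sub_nonneg.2 hts) ht hp hp1
  rw [sub_add_cancel] at this
  linarith

theorem Real.abs_sq_sub_sin_sq_le (x : ℝ) : |x ^ 2 - sin x ^ 2| ≤ x ^ 4 / 3 := by
  have hadd : |x + sin x| ≤ 2 * |x| :=
    (abs_add_le _ _).trans (by linarith [abs_sin_le_abs (x := x)])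
  calc |x ^ 2 - sin x ^ 2| = |x - sin x| * |x + sin x| := by rw [← abs_mul]; ring_nf
    _ ≤ |x| ^ 3 / 6 * (2 * |x|) :=
      mul_le_mul (abs_sub_sin_le x) hadd (abs_nonneg _) (by positivity)
    _ = |x| ^ 4 / 3 := by ring
    _ = x ^ 4 / 3 := by rw [pow_abs, abs_of_nonneg (by positivity)]

theorem Real.sq_mul_rpow {t : ℝ} (ht : 0 ≤ t) {y : ℝ} (hy : 0 ≤ y) (α : ℝ) :
    (t ^ 2 * y) ^ α = t ^ (2 * α) * y ^ α := by
  rw [mul_rpow (by positivity) hy, ← rpow_natCast_mul ht]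
  norm_num

section

variable {ι : Type*} [Fintype ι]

theorem abs_sum_sq_sub_sum_sin_sq_le (x : ι → ℝ) :
    |∑ i, x i ^ 2 - ∑ i, sin (x i) ^ 2| ≤ (∑ i, x i ^ 2) ^ 2 / 3 := by
  rw [← sum_sub_distrib]
  calc |∑ i, (x i ^ 2 - sin (x i) ^ 2)| ≤ ∑ i, (x i ^ 2) ^ 2 / 3 :=
        (abs_sum_le_sum_abs _ _).trans
          (sum_le_sum fun i _ ↦ (abs_sq_sub_sin_sq_le _).trans_eq (by ring))
    _ ≤ (∑ i, x i ^ 2) ^ 2 / 3 := by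
        rw [← sum_div]
        gcongr
        exact sum_sq_le_sq_sum_of_nonneg fun i _ ↦ sq_nonneg _

theorem abs_rpow_sum_sq_sub_rpow_sum_sin_sq_le (x : ι → ℝ) {α : ℝ} (hα : 0 ≤ α) (hα1 : α ≤ 1) :
    |(∑ i, x i ^ 2) ^ α - (∑ i, sin (x i) ^ 2) ^ α| ≤ ((∑ i, x i ^ 2) ^ 2 / 3) ^ α :=
  (abs_rpow_sub_rpow_le (by positivity) (by positivity) hα hα1).trans
    (rpow_le_rpow (abs_nonneg _) (abs_sum_sq_sub_sum_sin_sq_le x) hα)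

end

/-- For `0 < α < 1` and `n`, there is a constant `C` depending only on `α` and `n` such that
for all `ℏ > 0` and `θ ∈ ℝⁿ`,
`| (∑ 4π²θⱼ²)^α − ℏ^{-2α} (∑ 4 sin²(πℏθⱼ))^α | ≤ C ℏ^{2α} (∑ θⱼ²)^{2α}`. -/
theorem symbol_approximation (α : ℝ) (hα : 0 < α) (hα1 : α < 1) (n : ℕ) :
    ∃ C : ℝ, 0 < C ∧ ∀ (hbar : ℝ), 0 < hbar → ∀ θ : Fin n → ℝ,
      |(∑ j, 4 * Real.pi ^ 2 * θ j ^ 2) ^ α -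
          hbar ^ (-(2 * α)) * (∑ j, 4 * Real.sin (Real.pi * hbar * θ j) ^ 2) ^ α| ≤
        C * hbar ^ (2 * α) * (∑ j, θ j ^ 2) ^ (2 * α) := by
  refine ⟨4 ^ α * (π ^ 4 / 3) ^ α, by positivity, fun hbar hb θ ↦ ?_⟩
  set X := ∑ j, θ j ^ 2
  set Z := ∑ j, sin (π * hbar * θ j) ^ 2
  have hX : 0 ≤ X := by positivity
  have hZ : 0 ≤ Z := by positivity
  have key := abs_rpow_sum_sq_sub_rpow_sum_sin_sq_le (fun j ↦ π * hbar * θ j) hα.le hα1.le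
  have hx : ∑ j, (π * hbar * θ j) ^ 2 = hbar ^ 2 * (π ^ 2 * X) := by
    simp only [X, mul_sum, mul_pow]; ring_nf
  have hbound : ((hbar ^ 2 * (π ^ 2 * X)) ^ 2 / 3) ^ α
      = hbar ^ (2 * α) * (hbar ^ (2 * α) * ((π ^ 4 / 3) ^ α * X ^ (2 * α))) := by
    rw [show (hbar ^ 2 * (π ^ 2 * X)) ^ 2 / 3 = hbar ^ 2 * (hbar ^ 2 * (π ^ 4 / 3 * X ^ 2)) by
        ring,
      sq_mul_rpow hb.le (by positivity), sq_mul_rpow hb.le (by positivity),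
      mul_rpow (by positivity) (by positivity), ← rpow_natCast_mul hX]
    norm_num
  simp only [hx, hbound, sq_mul_rpow hb.le (by positivity : 0 ≤ π ^ 2 * X)] at key
  have hS : ∑ j, 4 * π ^ 2 * θ j ^ 2 = 4 * (π ^ 2 * X) := by simp only [X, mul_sum, mul_assoc]
  have hT : ∑ j, 4 * sin (π * hbar * θ j) ^ 2 = 4 * Z := (mul_sum ..).symm
  rw [hS, hT, mul_rpow (by norm_num) (by positivity), mul_rpow (by norm_num) hZ, rpow_neg hb.le]
  set h := hbar ^ (2 * α)
  have hh : 0 < h := by positivity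
  calc _ = |4 ^ α * h⁻¹ * (h * (π ^ 2 * X) ^ α - Z ^ α)| := by congr 1; field_simp
    _ = 4 ^ α * h⁻¹ * |h * (π ^ 2 * X) ^ α - Z ^ α| := by
        rw [abs_mul, abs_of_pos (by positivity)]
    _ ≤ 4 ^ α * h⁻¹ * (h * (h * ((π ^ 4 / 3) ^ α * X ^ (2 * α)))) := by gcongr
    _ = _ := by field_simp
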